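/- arXiv:1012.4049 — 4 statements merged into one kernel-verified Lean document; each statement's English description precedes it below -/
import Mathlib

section
/- For all integers k ≥ 3 and l with 1 ≤ l ≤ k−2, the composite map t_{(2,2l−1)} ∘ t_{(2,2l−3)} ∘ ⋯ ∘ t_{(2,3)} ∘ t_{(2,1)} : ℤ² → ℤ² (where t_{(2,1)} is applied first) sends the vector (4k−7, 1) either to the vector (4k−7−4l, 4lk−4l²−7l+1) or to its negative. -/
/-- The Picard–Lefschetz action on `H₁(T²;ℤ) ≅ ℤ²` of the right-handed Dehn twist
along the `(p,q)`-curve: `t_c(v₁,v₂) = (v₁ − (v₁q − v₂p)p, v₂ − (v₁q − v₂p)q)`. -/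
def twist (c : ℤ × ℤ) (v : ℤ × ℤ) : ℤ × ℤ :=
  (v.1 - (v.1 * c.2 - v.2 * c.1) * c.1, v.2 - (v.1 * c.2 - v.2 * c.1) * c.2)

/-!
The vectors `p n = (4k−7−4n, 4nk−4n²−7n+1)` satisfy `t_{(2,2n+1)} (p n) = −p (n+1)`, a
polynomial identity in `k` and `n`. Since every twist is linear, the composite of the first
`l` twists sends `p 0 = (4k−7, 1)` to `(−1)^l p l`.
-/

theorem List.foldl_range_eq_neg_one_pow_smul {M : Type*} [AddCommGroup M]
    (f : ℕ → M → M) (p : ℕ → M) (hf : ∀ n (u : ℤ) v, f n (u • v) = u • f n v)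
    (hp : ∀ n, f n (p n) = -p (n + 1)) (l : ℕ) :
    (List.range l).foldl (fun v j => f j v) (p 0) = (-1 : ℤ) ^ l • p l := by
  induction l with
  | zero => simp
  | succ n ih =>
    rw [List.range_succ, List.foldl_append, ih, List.foldl_cons, List.foldl_nil, hf, hp,
      pow_succ, mul_neg_one, neg_smul, smul_neg]

theorem twist_smul (c : ℤ × ℤ) (u : ℤ) (v : ℤ × ℤ) :
    twist c (u • v) = u • twist c v := by
  ext <;> simp only [twist, Prod.smul_fst, Prod.smul_snd, smul_eq_mul] <;> ring

def twistOrbit (k : ℤ) (n : ℕ) : ℤ × ℤ :=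
  (4 * k - 7 - 4 * n, 4 * n * k - 4 * n ^ 2 - 7 * n + 1)

theorem twist_twistOrbit (k : ℤ) (n : ℕ) :
    twist (2, 2 * (n + 1 : ℤ) - 1) (twistOrbit k n) = -twistOrbit k (n + 1) := by
  ext <;> simp only [twist, twistOrbit, Prod.fst_neg, Prod.snd_neg] <;> push_cast <;> ring

theorem twist_iterate_formula_two_general (k : ℤ) (l : ℕ) :
    (List.range l).foldl (fun v j => twist (2, 2 * (j + 1 : ℤ) - 1) v) (4 * k - 7, 1)
        = (4 * k - 7 - 4 * l, 4 * l * k - 4 * l ^ 2 - 7 * l + 1) ∨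
    (List.range l).foldl (fun v j => twist (2, 2 * (j + 1 : ℤ) - 1) v) (4 * k - 7, 1)
        = (-(4 * k - 7 - 4 * l), -(4 * l * k - 4 * l ^ 2 - 7 * l + 1)) := by
  have hstart : ((4 * k - 7, 1) : ℤ × ℤ) = twistOrbit k 0 := by simp [twistOrbit]
  -- `j` ranges over `List.range l` coerced to a list of integers; undo the coercion.
  simp only [bind_pure_comp, List.map_eq_map, List.foldl_map]
  rw [hstart, List.foldl_range_eq_neg_one_pow_smul _ _ (fun _ => twist_smul _)
    (twist_twistOrbit k)]
  rcases neg_one_pow_eq_or ℤ l with h | h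
  · exact .inl (by rw [h, one_smul]; rfl)
  · exact .inr (by rw [h, neg_one_smul]; rfl)

/-- for all integers `k ≥ 3` and `1 ≤ l ≤ k-2`, the composite
`t_{(2,2l−1)} ∘ ⋯ ∘ t_{(2,1)}` (with `t_{(2,1)}` applied first) sends
`(4k−7, 1)` to `±(4k−7−4l, 4lk−4l²−7l+1)`. -/
theorem twist_iterate_formula_two (k : ℤ) (hk : 3 ≤ k) (l : ℕ) (hl1 : 1 ≤ l)
    (hl2 : (l : ℤ) ≤ k - 2) :
    (List.range l).foldl (fun v j => twist (2, 2 * (j + 1 : ℤ) - 1) v) (4 * k - 7, 1)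
        = (4 * k - 7 - 4 * l, 4 * l * k - 4 * l ^ 2 - 7 * l + 1) ∨
    (List.range l).foldl (fun v j => twist (2, 2 * (j + 1 : ℤ) - 1) v) (4 * k - 7, 1)
        = (-(4 * k - 7 - 4 * l), -(4 * l * k - 4 * l ^ 2 - 7 * l + 1)) :=
  twist_iterate_formula_two_general k l
end

section
/- For every integer k ≥ 3, set G = T(2,1)·T(2,3)·T(2,5)⋯T(2,2k−5) ∈ SL(2,ℤ), the product of the matrices T(2,2l−1) for l = 1,…,k−2 with factors in increasing order of l from left to right. Then G⁻¹ · T(4k−7,1) · G = T(1,k−1); that is, the conjugate of the Dehn-twist matrix T(4k−7,1) by the composition of the twists T_{2,1},…,T_{2,2k−5} is the Dehn-twist matrix T(1,k−1). -/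
/-! A twist conjugated by a mapping class is the twist along the image curve:
`g⁻¹ T(p,q) g = T(gᵀ(p,q))`, because `T(p,q) = E + (-q,p)ᵀ(p,q)` and `gᵀ J g = J` for
`det g = 1`, where `J = [[0,-1],[1,0]]`.
The product `T(2,1)·T(2,3)⋯T(2,2n-1)` is `(-1)ⁿ [[1, n], [-4n, 1-4n²]]`, whose transpose sends
`(4n+1, 1)` to `(-1)ⁿ(1, n+1)`; and the twist along a curve does not depend on its orientation. -/

/-- `SL(2,ℤ)`. -/
abbrev SL2Z := Matrix.SpecialLinearGroup (Fin 2) ℤ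

/-- The matrix of the right-handed Dehn twist `T_{p,q}` along the `(p,q)`-curve:
rows `(1-pq, -q²)` and `(p², 1+pq)`. -/
def Tmat (p q : ℤ) : SL2Z :=
  ⟨!![1 - p * q, -q ^ 2; p ^ 2, 1 + p * q], by rw [Matrix.det_fin_two_of]; ring⟩

open Matrix

lemma neg_one_pow_sq {R : Type*} [Monoid R] [HasDistribNeg R] (n : ℕ) :
    ((-1 : R) ^ n) ^ 2 = 1 := by
  rw [← pow_mul, pow_mul', neg_one_sq, one_pow]

@[simp]
lemma Tmat_apply (p q : ℤ) : ⇑(Tmat p q) = !![1 - p * q, -q ^ 2; p ^ 2, 1 + p * q] := rfl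

lemma Tmat_mul_mul_of_sq_eq_one {s : ℤ} (hs : s ^ 2 = 1) (p q : ℤ) :
    Tmat (s * p) (s * q) = Tmat p q := by
  have hpq : s * p * (s * q) = p * q := by linear_combination p * q * hs
  ext i j
  simp only [Tmat_apply, hpq, mul_pow, hs, one_mul]

lemma inv_mul_Tmat_mul (g : SL2Z) (p q : ℤ) :
    g⁻¹ * Tmat p q * g = Tmat (g 0 0 * p + g 1 0 * q) (g 0 1 * p + g 1 1 * q) := by
  rw [mul_assoc, inv_mul_eq_iff_eq_mul]
  have hg : g 0 0 * g 1 1 - g 0 1 * g 1 0 = 1 := by rw [← det_fin_two]; exact g.det_coe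
  ext i j
  fin_cases i <;> fin_cases j <;>
    simp only [Matrix.SpecialLinearGroup.coe_mul, Tmat_apply, mul_apply, Fin.sum_univ_two,
      of_apply, cons_val', cons_val_zero, cons_val_one, cons_val_fin_one, Fin.zero_eta, Fin.mk_one,
      Fin.isValue]
  · linear_combination (g 0 0 * p + g 1 0 * q) * q * hg
  · linear_combination (g 0 1 * p + g 1 1 * q) * q * hg
  · linear_combination -(g 0 0 * p + g 1 0 * q) * p * hg
  · linear_combination -(g 0 1 * p + g 1 1 * q) * p * hg

def oddTwistProd (n : ℕ) : SL2Z :=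
  ⟨(-1) ^ n • !![1, (n : ℤ); -4 * n, 1 - 4 * n ^ 2], by
    rw [det_smul, det_fin_two_of, Fintype.card_fin, neg_one_pow_sq]
    ring⟩

@[simp]
lemma oddTwistProd_apply (n : ℕ) :
    ⇑(oddTwistProd n) = (-1) ^ n • !![1, (n : ℤ); -4 * n, 1 - 4 * n ^ 2] := rfl

lemma prod_map_range_Tmat_eq_oddTwistProd (n : ℕ) :
    ((List.range n).map (fun j => Tmat 2 (2 * (j + 1 : ℤ) - 1))).prod = oddTwistProd n := by
  induction n with
  | zero => ext i j; fin_cases i <;> fin_cases j <;> simp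
  | succ n ih =>
    -- the index list `List.range n` enters coerced to `List ℤ` through the list monad
    simp only [List.pure_def, List.bind_eq_flatMap] at ih ⊢
    rw [List.range_succ, List.flatMap_append, List.flatMap_singleton, List.map_append,
      List.map_singleton, List.prod_append, List.prod_singleton, ih]
    ext i j
    fin_cases i <;> fin_cases j <;>
      simp only [Matrix.SpecialLinearGroup.coe_mul, oddTwistProd_apply, Tmat_apply, mul_apply,
        Fin.sum_univ_two, Matrix.smul_apply, of_apply, cons_val', cons_val_zero, cons_val_one,
        cons_val_fin_one, smul_eq_mul, Fin.zero_eta, Fin.mk_one, Fin.isValue] <;>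
      push_cast <;> ring

/-- for every integer `k ≥ 3`, with
`G = T(2,1)·T(2,3)⋯T(2,2k−5)` (factors in increasing order of `l`),
one has `G⁻¹ · T(4k−7,1) · G = T(1,k−1)`. -/
theorem conj_T_4k_sub_7 (k : ℕ) (hk : 3 ≤ k) :
    (((List.range (k - 2)).map (fun j => Tmat 2 (2 * (j + 1 : ℤ) - 1))).prod)⁻¹
        * Tmat (4 * (k : ℤ) - 7) 1
        * ((List.range (k - 2)).map (fun j => Tmat 2 (2 * (j + 1 : ℤ) - 1))).prod
      = Tmat 1 ((k : ℤ) - 1) := by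
  obtain ⟨n, rfl⟩ : ∃ n, k = n + 2 := ⟨k - 2, by omega⟩
  rw [Nat.add_sub_cancel, prod_map_range_Tmat_eq_oddTwistProd, inv_mul_Tmat_mul,
    ← Tmat_mul_mul_of_sq_eq_one (neg_one_pow_sq n) 1]
  congr 1 <;>
    simp only [oddTwistProd_apply, Matrix.smul_apply, of_apply, cons_val', cons_val_zero,
      cons_val_one, cons_val_fin_one, smul_eq_mul, Fin.isValue] <;>
    push_cast <;> ring
end

section
/- For every integer s ≥ 3 there exists C ∈ SL(2,ℤ) such that T(2,1)·T(2,3)⋯T(2,2s−5)·T(1,s−1)·T(1,−1) = (−1)^{s+1} · C · X₁^{6−5s} · C⁻¹, where the initial product runs over the matrices T(2,2l−1) for l = 1,…,s−2 in increasing order of l. (This is the product-level content of the lemma that the Hurwitz system T_s can be changed by elementary transformations and simultaneous conjugations into the sequence (T_{2,1}, T_{2,3}, …, T_{2,2s−5}, T_{1,s−1}, T_{1,−1}), since elementary transformations preserve the total product and a simultaneous conjugation conjugates it.) -/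
/-- The matrix `X₁` with rows `(1,0),(1,1)`. -/
def X1 : SL2Z := ⟨!![1, 0; 1, 1], by norm_num [Matrix.det_fin_two_of]⟩

/-- `-E`, the negative of the identity matrix, as an element of `SL(2,ℤ)`. -/
def negE : SL2Z := ⟨!![-1, 0; 0, -1], by norm_num [Matrix.det_fin_two_of]⟩

/-! Take `C = 1`: the product is itself `±X₁^{6-5s}`. By induction,
`T(2,1)⋯T(2,2m-1) = (-1)^m [[1, m], [-4m, 1-4m²]]`, and multiplying this matrix by
`T(1,m+1)·T(1,-1)` gives `-X₁^{-5m-4}`. -/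

open Matrix.SpecialLinearGroup

theorem negE_eq_neg_one : negE = -1 := by
  ext i j
  fin_cases i <;> fin_cases j <;> rfl

theorem coe_X1_zpow (k : ℤ) : ((X1 ^ k : SL2Z) : Matrix (Fin 2) (Fin 2) ℤ) = !![1, 0; k, 1] := by
  induction k with
  | zero => rw [zpow_zero, coe_one, Matrix.one_fin_two]
  | succ n h =>
    simp_rw [zpow_add, zpow_one, coe_mul, h, X1, Matrix.mul_fin_two]
    congrm !![?_, ?_; ?_, ?_] <;> ring
  | pred n h =>
    simp_rw [zpow_sub, zpow_one, coe_mul, h, coe_inv, X1, Matrix.adjugate_fin_two_of,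
      Matrix.mul_fin_two]
    congrm !![?_, ?_; ?_, ?_] <;> ring

def Tmat2Prod (m : ℤ) : SL2Z :=
  ⟨!![1, m; -4 * m, 1 - 4 * m ^ 2], by rw [Matrix.det_fin_two_of]; ring⟩

theorem Tmat2Prod_mul_Tmat (m : ℤ) : Tmat2Prod m * Tmat 2 (2 * m + 1) = -Tmat2Prod (m + 1) := by
  apply Subtype.ext
  simp_rw [coe_mul, coe_neg, Tmat2Prod, Tmat, Matrix.mul_fin_two, Matrix.neg_of,
    Matrix.neg_cons, Matrix.neg_empty]
  congrm !![?_, ?_; ?_, ?_] <;> ring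

theorem prod_range_Tmat_two_odd (n : ℕ) :
    ((List.range n).map fun j : ℕ => Tmat 2 (2 * j + 1)).prod = (-1) ^ n * Tmat2Prod n := by
  induction n with
  | zero => ext i j; fin_cases i <;> fin_cases j <;> rfl
  | succ n ih =>
    rw [List.prod_range_succ, ih, mul_assoc, Tmat2Prod_mul_Tmat, pow_succ, mul_neg_one, neg_mul,
      mul_neg, Nat.cast_succ]

theorem Tmat2Prod_mul_Tmat_one_mul_Tmat_one (m : ℤ) :
    Tmat2Prod m * Tmat 1 (m + 1) * Tmat 1 (-1) = -X1 ^ (-(5 * m + 4)) := by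
  apply Subtype.ext
  simp_rw [coe_mul, coe_neg, coe_X1_zpow, Tmat2Prod, Tmat, Matrix.mul_fin_two, Matrix.neg_of,
    Matrix.neg_cons, Matrix.neg_empty]
  congrm !![?_, ?_; ?_, ?_] <;> ring

/-- for every integer `s ≥ 3` there exists `C ∈ SL(2,ℤ)` with
`T(2,1)·T(2,3)⋯T(2,2s−5)·T(1,s−1)·T(1,−1) = (−1)^{s+1} · C · X₁^{6−5s} · C⁻¹`. -/
theorem transformed_Ts_product (s : ℕ) (hs : 3 ≤ s) :
    ∃ C : SL2Z,
      ((List.range (s - 2)).map (fun j => Tmat 2 (2 * (j + 1 : ℤ) - 1))).prod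
          * Tmat 1 ((s : ℤ) - 1) * Tmat 1 (-1)
        = negE ^ (s + 1) * (C * X1 ^ (6 - 5 * (s : ℤ)) * C⁻¹) := by
  refine ⟨1, ?_⟩
  obtain ⟨m, rfl⟩ : ∃ m, s = m + 2 := ⟨s - 2, by omega⟩
  have hfactors : ((List.range m).map (fun j => Tmat 2 (2 * (j + 1 : ℤ) - 1))) =
      (List.range m).map (fun j : ℕ => Tmat 2 (2 * j + 1)) := by
    -- on the left, `List.range m` is coerced to a `List ℤ` through the list monad
    simp only [List.pure_def, List.bind_eq_flatMap, ← List.map_eq_flatMap, List.map_map]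
    congr 1
    funext j
    rw [Function.comp_apply, mul_add, mul_one, add_sub_assoc]
    norm_num
  have hq : ((m + 2 : ℕ) : ℤ) - 1 = m + 1 := by push_cast; ring
  have hk : 6 - 5 * ((m + 2 : ℕ) : ℤ) = -(5 * m + 4) := by push_cast; ring
  rw [Nat.add_sub_cancel, hfactors, prod_range_Tmat_two_odd, hq, hk, mul_assoc, mul_assoc,
    ← mul_assoc (Tmat2Prod m), Tmat2Prod_mul_Tmat_one_mul_Tmat_one, negE_eq_neg_one, one_mul,
    inv_one, mul_one]
  simp only [pow_succ, mul_neg, mul_one, neg_neg, neg_mul]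
end

section
/- Let d₁, d₂ and n be integers with d₁ ∉ {1,2} and d₂ ∉ {1,2}, and suppose that in SL(2,ℤ) the product X₂·X₁^{d₁}·X₂·X₁^{d₂}·X₂ equals X₁ⁿ or −X₁ⁿ. Then d₁ = d₂ = 3 and n = −3; moreover X₂·X₁³·X₂·X₁³·X₂ = X₁⁻³. (This is the algebraic core of the classification of genus-1 simplified broken Lefschetz fibrations with three Lefschetz singularities, with dᵢ = nᵢ − n_{i+1} for a Hurwitz system (X₁^{−n₁}X₂X₁^{n₁}, X₁^{−n₂}X₂X₁^{n₂}, X₁^{−n₃}X₂X₁^{n₃}).) -/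
/-- The matrix `X₂` with rows `(1,-1),(0,1)`. -/
def X2 : SL2Z := ⟨!![1, -1; 0, 1], by norm_num [Matrix.det_fin_two_of]⟩

/-!
Both sides are explicit matrices. Writing `X₁ᵈ = [[1,0],[d,1]]`, the word
`X₂X₁ᵃX₂X₁ᵇX₂` has first row `(c, 2a - 3 - b(a - 2))` with `c = 1 - a + b(a - 2)`.
Matching it with the first row `±(1, 0)` of `±X₁ⁿ` gives `a = 2 ± 1`; the sign `-`
is excluded by `a ≠ 1`, and for `a = 3` the remaining entries force `b = 3`, `n = -3`.
-/

open Matrix.SpecialLinearGroup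

theorem coe_X1_zpow_s8 (d : ℤ) : (X1 ^ d).1 = !![1, 0; d, 1] := by
  induction d with
  | zero => rw [zpow_zero, coe_one, Matrix.one_fin_two]
  | succ d ih =>
    simp_rw [zpow_add_one, coe_mul, ih, X1, Matrix.mul_fin_two]
    congrm !![_, _; ?_, _]
    push_cast; ring
  | pred d ih =>
    simp_rw [zpow_sub_one, coe_mul, ih, coe_inv, X1, Matrix.adjugate_fin_two_of,
      Matrix.mul_fin_two]
    congrm !![?_, ?_; ?_, ?_] <;> push_cast <;> ring

def twistWord (a b : ℤ) : SL2Z := X2 * X1 ^ a * X2 * X1 ^ b * X2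

theorem coe_twistWord (a b : ℤ) :
    (twistWord a b).1 =
      !![1 - a + b * (a - 2), 2 * a - 3 - b * (a - 2);
        a + b * (1 - a), 1 - 2 * a - b * (1 - a)] := by
  simp_rw [twistWord, coe_mul, coe_X1_zpow_s8, X2, Matrix.mul_fin_two]
  congrm !![?_, ?_; ?_, ?_] <;> ring

theorem eq_of_twistWord_eq_X1_zpow {a b n : ℤ} (h : twistWord a b = X1 ^ n) :
    a = 3 ∧ b = 3 ∧ n = -3 := by
  have h := congrArg Subtype.val h
  rw [coe_twistWord, coe_X1_zpow_s8] at h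
  have h00 := congrFun₂ h 0 0
  have h01 := congrFun₂ h 0 1
  have h10 := congrFun₂ h 1 0
  simp only [Matrix.of_apply, Matrix.cons_val', Matrix.cons_val_zero, Matrix.cons_val_one,
    Matrix.empty_val', Matrix.cons_val_fin_one] at h00 h01 h10
  obtain rfl : a = 3 := by linarith
  obtain rfl : b = 3 := by linarith
  exact ⟨rfl, rfl, by linarith⟩

theorem eq_one_of_twistWord_eq_negE_mul_X1_zpow {a b n : ℤ}
    (h : twistWord a b = negE * X1 ^ n) : a = 1 := by
  have h := congrArg Subtype.val h
  rw [coe_twistWord, coe_mul, coe_X1_zpow_s8, negE, Matrix.mul_fin_two] at h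
  have h00 := congrFun₂ h 0 0
  have h01 := congrFun₂ h 0 1
  simp only [Matrix.of_apply, Matrix.cons_val', Matrix.cons_val_zero, Matrix.cons_val_one,
    Matrix.empty_val', Matrix.cons_val_fin_one] at h00 h01
  linarith

theorem twistWord_three_three : twistWord 3 3 = X1 ^ (-3 : ℤ) := by
  ext : 1
  rw [coe_twistWord, coe_X1_zpow_s8]
  norm_num

theorem three_singularities_case_general (d₁ d₂ n : ℤ)
    (hd₁ : d₁ ≠ 1 ∧ d₁ ≠ 2)
    (h : X2 * X1 ^ d₁ * X2 * X1 ^ d₂ * X2 = X1 ^ n ∨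
         X2 * X1 ^ d₁ * X2 * X1 ^ d₂ * X2 = negE * X1 ^ n) :
    d₁ = 3 ∧ d₂ = 3 ∧ n = -3 ∧
      X2 * X1 ^ (3 : ℤ) * X2 * X1 ^ (3 : ℤ) * X2 = X1 ^ (-3 : ℤ) := by
  rcases h with h | h
  · obtain ⟨rfl, rfl, rfl⟩ := eq_of_twistWord_eq_X1_zpow h
    exact ⟨rfl, rfl, rfl, twistWord_three_three⟩
  · exact absurd (eq_one_of_twistWord_eq_negE_mul_X1_zpow h) hd₁.1

/-- if `d₁, d₂ ∉ {1,2}` and `X₂·X₁^{d₁}·X₂·X₁^{d₂}·X₂ = ±X₁ⁿ` in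
`SL(2,ℤ)`, then `d₁ = d₂ = 3` and `n = −3`; moreover
`X₂·X₁³·X₂·X₁³·X₂ = X₁⁻³`. -/
theorem three_singularities_case (d₁ d₂ n : ℤ)
    (hd₁ : d₁ ≠ 1 ∧ d₁ ≠ 2) (hd₂ : d₂ ≠ 1 ∧ d₂ ≠ 2)
    (h : X2 * X1 ^ d₁ * X2 * X1 ^ d₂ * X2 = X1 ^ n ∨
         X2 * X1 ^ d₁ * X2 * X1 ^ d₂ * X2 = negE * X1 ^ n) :
    d₁ = 3 ∧ d₂ = 3 ∧ n = -3 ∧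
      X2 * X1 ^ (3 : ℤ) * X2 * X1 ^ (3 : ℤ) * X2 = X1 ^ (-3 : ℤ) :=
  three_singularities_case_general d₁ d₂ n hd₁ h
end
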